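/- For every n ≥ 0, det((H_{i+j}(2))_{i,j=0}^{2n}) = 0, where H_m(2) = ∑_{k=1}^{m} 2^k/k. -/

import Mathlib

/-!
Since `H_m(2) = ∫₀² (1 + x + ⋯ + x^(m-1)) dx`, the Hankel matrix is the moment matrix of the
functional `p ↦ ∫₀² (p(x) - p(1)) / (x - 1) dx`. The coefficients of the Legendre polynomial
`U = D^(2n) (x (x - 2))^(2n)` of `[0, 2]` form a kernel vector: row `i` applied to them is
`∫₀² (1 + ⋯ + x^(i-1)) U(x) dx + ∫₀² (U(x) - U(1)) / (x - 1) dx`. The first integral vanishes by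
orthogonality of `U` to polynomials of degree `< 2n`, the second because `U` is symmetric about `1`,
which makes the integrand odd about `1`.
-/

/-- `H_m(2) = ∑_{k=1}^m 2^k/k`. -/
noncomputable def harmonicTwo (m : ℕ) : ℝ := ∑ k ∈ Finset.Icc 1 m, (2 : ℝ) ^ k / (k : ℝ)

open Polynomial Finset

theorem intervalIntegral.integral_eq_zero_of_antisymm {f : ℝ → ℝ} {a b : ℝ}
    (hf : ∀ x, f (a + b - x) = -f x) : ∫ x in a..b, f x = 0 := by
  have h := intervalIntegral.integral_comp_sub_left f (a := a) (b := b) (a + b)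
  simp only [hf, intervalIntegral.integral_neg, add_sub_cancel_right, add_sub_cancel_left] at h
  linarith

theorem Matrix.det_hankel_eq_zero_of_sum_coeff_mul_eq_zero {K : Type*} [Field K] (h : ℕ → K)
    {N : ℕ} {U : K[X]} (hU : U ≠ 0) (hUdeg : U.natDegree ≤ N)
    (hker : ∀ i ≤ N, ∑ j ∈ range (N + 1), U.coeff j * h (i + j) = 0) :
    (of fun i j : Fin (N + 1) => h (i + j)).det = 0 := by
  rw [← exists_mulVec_eq_zero_iff]
  refine ⟨fun j => U.coeff j, fun hzero => hU ?_, ?_⟩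
  · ext k
    rcases lt_or_ge k (N + 1) with hk | hk
    · simpa using congrFun hzero ⟨k, hk⟩
    · exact coeff_eq_zero_of_natDegree_lt (by omega)
  · funext i
    simp only [mulVec, dotProduct, of_apply, Pi.zero_apply]
    rw [← hker i (by omega), ← Fin.sum_univ_eq_sum_range (fun j => U.coeff j * h (i + j))]
    simp [mul_comm]

namespace Polynomial

theorem iterate_derivative_comp_C_sub_X {R : Type*} [CommRing R] (p : R[X]) (c : R) (k : ℕ) :
    derivative^[k] (p.comp (C c - X)) = (-1) ^ k * (derivative^[k] p).comp (C c - X) := by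
  induction k generalizing p with
  | zero => simp
  | succ k ih => simp [ih (derivative p), derivative_comp, pow_succ]

theorem sum_coeff_smul_geom_sum {R : Type*} [CommRing R] (U : R[X]) {N : ℕ}
    (hN : U.natDegree < N) (i : ℕ) :
    ∑ j ∈ range N, U.coeff j • ∑ t ∈ range (i + j), (X : R[X]) ^ t =
      (∑ t ∈ range i, X ^ t) * U + (U - C (U.eval 1)) /ₘ (X - C 1) := by
  apply (monic_X_sub_C (1 : R)).isRegular.left
  have hdiv : (X - C 1) * ((U - C (U.eval 1)) /ₘ (X - C 1)) = U - C (U.eval 1) :=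
    mul_divByMonic_eq_iff_isRoot.mpr (by simp)
  dsimp only
  rw [mul_add, ← mul_assoc, hdiv, C_1, mul_geom_sum, Finset.mul_sum]
  simp_rw [mul_smul_comm, mul_geom_sum, smul_sub, pow_add, Finset.sum_sub_distrib]
  have hU : ∑ j ∈ range N, C (U.coeff j) * X ^ j = U := (U.as_sum_range_C_mul_X_pow' hN).symm
  have h1 : ∑ j ∈ range N, C (U.coeff j) = C (U.eval 1) := by
    simp [eval_eq_sum_range' hN, map_sum]
  simp only [smul_eq_C_mul, mul_one, mul_left_comm _ (X ^ i), ← Finset.mul_sum]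
  linear_combination (X ^ i : R[X]) * hU - h1

theorem sub_C_eval_divByMonic_X_sub_C_comp_eq_neg {R : Type*} [CommRing R] {p : R[X]} {a : R}
    (hp : p.comp (C (2 * a) - X) = p) :
    ((p - C (p.eval a)) /ₘ (X - C a)).comp (C (2 * a) - X) =
      -((p - C (p.eval a)) /ₘ (X - C a)) := by
  set V := (p - C (p.eval a)) /ₘ (X - C a)
  have hV : (X - C a) * V = p - C (p.eval a) := mul_divByMonic_eq_iff_isRoot.mpr (by simp)
  apply (monic_X_sub_C a).isRegular.left
  have := congrArg (·.comp (C (2 * a) - X)) hV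
  simp only [mul_comp, sub_comp, X_comp, C_comp, hp] at this
  dsimp only
  have h2 : C (2 * a) = 2 * C a := by rw [C_mul, map_ofNat C 2]
  linear_combination -this + hV + V.comp (C (2 * a) - X) * h2

noncomputable def integralEval (a b : ℝ) : ℝ[X] →ₗ[ℝ] ℝ where
  toFun p := ∫ x in a..b, p.eval x
  map_add' p q := by
    simpa using intervalIntegral.integral_add (p.continuous.intervalIntegrable a b)
      (q.continuous.intervalIntegrable a b)
  map_smul' c p := by simp

theorem integralEval_apply (a b : ℝ) (p : ℝ[X]) : integralEval a b p = ∫ x in a..b, p.eval x :=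
  rfl

theorem integralEval_mul_iterate_derivative_eq_zero {a b : ℝ} {p g : ℝ[X]} {N : ℕ}
    (hp : derivative^[N] p = 0) (ha : (X - C a) ^ N ∣ g) (hb : (X - C b) ^ N ∣ g) :
    integralEval a b (p * derivative^[N] g) = 0 := by
  induction N generalizing p with
  | zero =>
    obtain rfl : p = 0 := hp
    simp
  | succ N ih =>
    have hroot {c : ℝ} (hc : (X - C c) ^ (N + 1) ∣ g) : (derivative^[N] g).eval c = 0 :=
      dvd_iff_isRoot.mp (by simpa using pow_sub_dvd_iterate_derivative_of_pow_dvd N hc)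
    have hweak {c : ℝ} (hc : (X - C c) ^ (N + 1) ∣ g) : (X - C c) ^ N ∣ g :=
      (pow_dvd_pow _ N.le_succ).trans hc
    rw [integralEval_apply]
    simp only [eval_mul, Function.iterate_succ_apply']
    rw [intervalIntegral.integral_mul_deriv_eq_deriv_mul (fun x _ => p.hasDerivAt x)
      (fun x _ => (derivative^[N] g).hasDerivAt x) (p.derivative.continuous.intervalIntegrable _ _)
      ((derivative (derivative^[N] g)).continuous.intervalIntegrable _ _), hroot ha, hroot hb]
    have := ih (p := derivative p) (by rwa [← Function.iterate_succ_apply]) (hweak ha) (hweak hb)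
    simpa [integralEval_apply] using this

theorem integralEval_eq_zero_of_comp_eq_neg {a b : ℝ} {p : ℝ[X]}
    (hp : p.comp (C (a + b) - X) = -p) : integralEval a b p = 0 :=
  intervalIntegral.integral_eq_zero_of_antisymm fun x => by
    simpa [eval_comp] using congrArg (eval x) hp

/-- Rodrigues' formula for the Legendre polynomial of degree `m` on `[0, 2]`, unnormalised. -/
noncomputable def legendreZeroTwo (m : ℕ) : ℝ[X] := derivative^[m] ((X * (X - C 2)) ^ m)

theorem monic_X_mul_X_sub_C_two_pow (m : ℕ) : ((X * (X - C 2)) ^ m : ℝ[X]).Monic :=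
  (monic_X.mul (monic_X_sub_C 2)).pow m

theorem natDegree_X_mul_X_sub_C_two_pow (m : ℕ) :
    ((X * (X - C 2)) ^ m : ℝ[X]).natDegree = 2 * m := by
  rw [(monic_X.mul (monic_X_sub_C 2)).natDegree_pow, (monic_X).natDegree_mul (monic_X_sub_C 2)]
  simp [mul_comm]

theorem natDegree_legendreZeroTwo_le (m : ℕ) : (legendreZeroTwo m).natDegree ≤ m := by
  have := natDegree_iterate_derivative ((X * (X - C 2)) ^ m : ℝ[X]) m
  rw [natDegree_X_mul_X_sub_C_two_pow] at this
  unfold legendreZeroTwo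
  omega

theorem coeff_legendreZeroTwo_self (m : ℕ) :
    (legendreZeroTwo m).coeff m = (2 * m).descFactorial m := by
  rw [legendreZeroTwo, coeff_iterate_derivative, ← two_mul, ← natDegree_X_mul_X_sub_C_two_pow,
    (monic_X_mul_X_sub_C_two_pow m).coeff_natDegree, nsmul_one]

theorem legendreZeroTwo_ne_zero (m : ℕ) : legendreZeroTwo m ≠ 0 := by
  intro h
  have hcoeff := coeff_legendreZeroTwo_self m
  rw [h, coeff_zero, eq_comm, Nat.cast_eq_zero, Nat.descFactorial_eq_zero_iff_lt] at hcoeff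
  omega

theorem legendreZeroTwo_comp_C_two_sub_X (m : ℕ) :
    (legendreZeroTwo m).comp (C 2 - X) = (-1) ^ m * legendreZeroTwo m := by
  have hsymm : ((X * (X - C 2)) ^ m : ℝ[X]).comp (C 2 - X) = (X * (X - C 2)) ^ m := by
    simp only [pow_comp, mul_comp, sub_comp, X_comp, C_comp]
    ring
  have h := iterate_derivative_comp_C_sub_X ((X * (X - C 2)) ^ m : ℝ[X]) 2 m
  rw [hsymm] at h
  rw [legendreZeroTwo]
  conv_rhs => rw [h, ← mul_assoc, ← mul_pow, neg_one_mul, neg_neg, one_pow, one_mul]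

theorem integralEval_mul_legendreZeroTwo {m : ℕ} {p : ℝ[X]} (hp : derivative^[m] p = 0) :
    integralEval 0 2 (p * legendreZeroTwo m) = 0 := by
  refine integralEval_mul_iterate_derivative_eq_zero hp (pow_dvd_pow_of_dvd ?_ m)
    (pow_dvd_pow_of_dvd (dvd_mul_left _ _) m)
  simp

end Polynomial

theorem harmonicTwo_eq_integralEval (m : ℕ) :
    harmonicTwo m = integralEval 0 2 (∑ t ∈ range m, X ^ t) := by
  simp only [integralEval_apply, eval_finsetSum, eval_pow, eval_X]
  rw [intervalIntegral.integral_finsetSum fun t _ => intervalIntegral.intervalIntegrable_pow t,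
    harmonicTwo, ← Finset.Ico_add_one_right_eq_Icc, Finset.sum_Ico_eq_sum_range]
  refine Finset.sum_congr rfl fun t _ => ?_
  simp [integral_pow, add_comm]

theorem sum_coeff_legendreZeroTwo_mul_harmonicTwo {n i : ℕ} (hi : i ≤ 2 * n) :
    ∑ j ∈ range (2 * n + 1), (legendreZeroTwo (2 * n)).coeff j * harmonicTwo (i + j) = 0 := by
  set U := legendreZeroTwo (2 * n)
  have hsymm : U.comp (C (2 * 1) - X) = U := by
    rw [mul_one, legendreZeroTwo_comp_C_two_sub_X, (even_two_mul n).neg_one_pow, one_mul]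
  have hgeom : derivative^[2 * n] (∑ t ∈ range i, X ^ t : ℝ[X]) = 0 := by
    rw [iterate_derivative_sum]
    exact sum_eq_zero fun t ht =>
      iterate_derivative_eq_zero (by rw [natDegree_X_pow]; exact (mem_range.mp ht).trans_le hi)
  calc ∑ j ∈ range (2 * n + 1), U.coeff j * harmonicTwo (i + j)
      = integralEval 0 2 (∑ j ∈ range (2 * n + 1), U.coeff j • ∑ t ∈ range (i + j), X ^ t) := by
        simp [harmonicTwo_eq_integralEval, map_sum, map_smul]
    _ = integralEval 0 2 ((∑ t ∈ range i, X ^ t) * U)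
          + integralEval 0 2 ((U - C (U.eval 1)) /ₘ (X - C 1)) := by
        rw [sum_coeff_smul_geom_sum U (Nat.lt_succ_of_le (natDegree_legendreZeroTwo_le _)),
          map_add]
    _ = 0 := by
        rw [integralEval_mul_legendreZeroTwo hgeom, integralEval_eq_zero_of_comp_eq_neg
          (by simpa using sub_C_eval_divByMonic_X_sub_C_comp_eq_neg hsymm), add_zero]

/-- `det((H_{i+j}(2))_{i,j=0}^{2n}) = 0`. -/
theorem det_hankel_harmonicTwo_even (n : ℕ) :
    Matrix.det (Matrix.of fun i j : Fin (2 * n + 1) => harmonicTwo ((i : ℕ) + (j : ℕ))) = 0 :=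
  Matrix.det_hankel_eq_zero_of_sum_coeff_mul_eq_zero harmonicTwo (legendreZeroTwo_ne_zero _)
    (natDegree_legendreZeroTwo_le _) fun _ hi => sum_coeff_legendreZeroTwo_mul_harmonicTwo hi
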